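/- arXiv:2603.04190 — 3 statements merged into one kernel-verified Lean document; each statement's English description precedes it below -/
import Mathlib

section
/- For every class K∞ function α, there exists a class K∞ function η that is globally Lipschitz with constant 1 and satisfies η(s) ≤ (1/2)·α⁻¹(s) for all s ≥ 0. -/
theorem exists_lip1_Kinf_below (α αinv : ℝ → ℝ)
    (hcont : ContinuousOn α (Set.Ici 0))
    (hmono : StrictMonoOn α (Set.Ici 0))
    (h0 : α 0 = 0)
    (hunb : ∀ M : ℝ, ∃ s : ℝ, 0 ≤ s ∧ M ≤ α s)
    (hinv_nonneg : ∀ a : ℝ, 0 ≤ a → 0 ≤ αinv a)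
    (hright : ∀ a : ℝ, 0 ≤ a → α (αinv a) = a)
    (hleft : ∀ s : ℝ, 0 ≤ s → αinv (α s) = s) :
    ∃ η : ℝ → ℝ, ContinuousOn η (Set.Ici 0) ∧ StrictMonoOn η (Set.Ici 0) ∧
      η 0 = 0 ∧ (∀ M : ℝ, ∃ s : ℝ, 0 ≤ s ∧ M ≤ η s) ∧
      (∀ r s : ℝ, 0 ≤ r → 0 ≤ s → |η r - η s| ≤ |r - s|) ∧
      (∀ s : ℝ, 0 ≤ s → η s ≤ (1 / 2) * αinv s) := by
  classical
  set f : ℝ → ℝ := fun t => (1 / 2) * αinv t with hfdef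
  have hinv0 : αinv 0 = 0 := by
    have := hleft 0 le_rfl
    rwa [h0] at this
  have hf0 : f 0 = 0 := by simp [hfdef, hinv0]
  have hfnn : ∀ t, 0 ≤ t → 0 ≤ f t := by
    intro t ht
    have := hinv_nonneg t ht
    simp only [hfdef]
    linarith
  -- strict monotonicity of αinv, hence of f
  have hinv_sm : ∀ a b : ℝ, 0 ≤ a → a < b → αinv a < αinv b := by
    intro a b ha hab
    by_contra hcon
    push_neg at hcon
    have hb : (0:ℝ) ≤ b := le_trans ha hab.le
    have hba : α (αinv b) ≤ α (αinv a) := by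
      rcases eq_or_lt_of_le hcon with heq | hlt
      · rw [heq]
      · exact (hmono (hinv_nonneg b hb) (hinv_nonneg a ha) hlt).le
    rw [hright a ha, hright b hb] at hba
    linarith
  have hfsm : ∀ a b : ℝ, 0 ≤ a → a < b → f a < f b := by
    intro a b ha hab
    have := hinv_sm a b ha hab
    simp only [hfdef]
    linarith
  have hfmono : ∀ a b : ℝ, 0 ≤ a → a ≤ b → f a ≤ f b := by
    intro a b ha hab
    rcases eq_or_lt_of_le hab with heq | hlt
    · rw [heq]
    · exact (hfsm a b ha hlt).le
  set g : ℝ → ℝ := fun t => f t - t with hgdef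
  set m : ℝ → ℝ := fun s => sInf (g '' Set.Icc 0 s) with hmdef
  have hne : ∀ s : ℝ, 0 ≤ s → (g '' Set.Icc 0 s).Nonempty := by
    intro s hs
    exact ⟨g 0, ⟨0, ⟨le_rfl, hs⟩, rfl⟩⟩
  have hm_le : ∀ s t : ℝ, 0 ≤ t → t ≤ s → m s ≤ g t := by
    intro s t ht hts
    apply csInf_le
    · refine ⟨-s, ?_⟩
      rintro x ⟨u, ⟨hu0, hus⟩, rfl⟩
      have := hfnn u hu0
      simp only [hgdef]
      linarith
    · exact ⟨t, ⟨ht, hts⟩, rfl⟩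
  have hm_ge : ∀ s c : ℝ, 0 ≤ s → (∀ t, 0 ≤ t → t ≤ s → c ≤ g t) → c ≤ m s := by
    intro s c hs h
    apply le_csInf (hne s hs)
    rintro x ⟨u, ⟨hu0, hus⟩, rfl⟩
    exact h u hu0 hus
  set η : ℝ → ℝ := fun s => s + m s with hetadef
  -- η 0 = 0
  have hm0 : m 0 = 0 := by
    have h1 : m 0 ≤ g 0 := hm_le 0 0 le_rfl le_rfl
    have h2 : g 0 ≤ m 0 := by
      apply hm_ge 0 (g 0) le_rfl
      intro t ht hts
      have : t = 0 := le_antisymm hts ht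
      rw [this]
    have : g 0 = 0 := by simp [hgdef, hf0]
    linarith
  have heta0 : η 0 = 0 := by simp [hetadef, hm0]
  -- η ≤ f
  have heta_le_f : ∀ s, 0 ≤ s → η s ≤ f s := by
    intro s hs
    have := hm_le s s hs le_rfl
    simp only [hetadef, hgdef] at *
    linarith
  -- monotone + Lipschitz helper
  have hkey : ∀ a b : ℝ, 0 ≤ a → a ≤ b → η a ≤ η b ∧ η b - η a ≤ b - a := by
    intro a b ha hab
    have hb : (0:ℝ) ≤ b := le_trans ha hab
    constructor
    · -- m b ≥ m a - (b - a)
      have hmb : m a - (b - a) ≤ m b := by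
        apply hm_ge b _ hb
        intro t ht htb
        rcases le_or_gt t a with hta | hta
        · have := hm_le a t ht hta
          linarith
        · have h1 : f a ≤ f t := hfmono a t ha hta.le
          have h2 : m a ≤ g a := hm_le a a ha le_rfl
          simp only [hgdef] at *
          linarith
      simp only [hetadef]
      linarith
    · have hmba : m b ≤ m a := by
        apply hm_ge a _ ha
        intro t ht hta
        exact hm_le b t ht (le_trans hta hab)
      simp only [hetadef]
      linarith
  -- strict monotonicity
  have hsm : ∀ a b : ℝ, 0 ≤ a → a < b → η a < η b := by
    intro a b ha hab
    set mid : ℝ := (a + b) / 2 with hmid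
    have hamid : a < mid := by simp only [hmid]; linarith
    set δ : ℝ := f mid - f a with hδ
    have hδpos : 0 < δ := by
      have := hfsm a mid ha hamid
      simp only [hδ]; linarith
    set ε : ℝ := min δ ((b - a) / 2) with hε
    have hεpos : 0 < ε := lt_min hδpos (by linarith)
    have hmb : min (m a) (f a - b + ε) ≤ m b := by
      apply hm_ge b _ (le_trans ha hab.le)
      intro t ht htb
      rcases le_or_gt t a with hta | hta
      · exact le_trans (min_le_left _ _) (hm_le a t ht hta)
      · refine le_trans (min_le_right _ _) ?_
        rcases le_or_gt mid t with hmt | hmt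
        · have h1 : f mid ≤ f t := hfmono mid t (by linarith) hmt
          simp only [hgdef]
          have hεδ : ε ≤ δ := min_le_left _ _
          simp only [hδ] at hεδ
          linarith
        · have h1 : f a ≤ f t := hfmono a t ha hta.le
          have hεb : ε ≤ (b - a) / 2 := min_le_right _ _
          have htmid : t < mid := hmt
          simp only [hgdef]
          simp only [hmid] at htmid
          linarith
    have hma : m a ≤ g a := hm_le a a ha le_rfl
    simp only [hetadef]
    rcases le_total (m a) (f a - b + ε) with hc | hc
    · have : min (m a) (f a - b + ε) = m a := min_eq_left hc
      rw [this] at hmb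
      linarith
    · have : min (m a) (f a - b + ε) = f a - b + ε := min_eq_right hc
      rw [this] at hmb
      simp only [hgdef] at hma
      linarith
  -- Lipschitz
  have hlip : ∀ r s : ℝ, 0 ≤ r → 0 ≤ s → |η r - η s| ≤ |r - s| := by
    intro r s hr hs
    rcases le_total r s with h | h
    · obtain ⟨h1, h2⟩ := hkey r s hr h
      rw [abs_sub_comm, abs_sub_comm r s, abs_of_nonneg (by linarith), abs_of_nonneg (by linarith)]
      linarith
    · obtain ⟨h1, h2⟩ := hkey s r hs h
      rw [abs_of_nonneg (by linarith), abs_of_nonneg (by linarith)]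
      linarith
  -- continuity from Lipschitz
  have hcontη : ContinuousOn η (Set.Ici 0) := by
    have : LipschitzOnWith 1 η (Set.Ici 0) := by
      apply LipschitzOnWith.of_dist_le_mul
      intro x hx y hy
      simp only [Real.dist_eq, NNReal.coe_one, one_mul]
      exact hlip x y hx hy
    exact this.continuousOn
  refine ⟨η, hcontη, ?_, heta0, ?_, hlip, ?_⟩
  · intro a ha b hb hab
    exact hsm a b ha hab
  · -- unboundedness
    intro M
    set M' : ℝ := max M 0 with hM'
    have hM'nn : (0:ℝ) ≤ M' := le_max_right _ _
    set T : ℝ := α (2 * M') with hT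
    have hTnn : (0:ℝ) ≤ T := by
      rcases eq_or_lt_of_le (by linarith : (0:ℝ) ≤ 2 * M') with heq | hlt
      · simp [hT, ← heq, h0]
      · have := hmono (le_refl (0:ℝ)).ge.le (by linarith : (0:ℝ) ≤ 2 * M') hlt
        simp only [hT]
        rw [h0] at this
        exact this.le
    have hfT : f T = M' := by
      simp only [hfdef, hT]
      rw [hleft (2 * M') (by linarith)]
      ring
    refine ⟨T + M', by linarith, ?_⟩
    have hmge : -T ≤ m (T + M') := by
      apply hm_ge (T + M') _ (by linarith)
      intro t ht hts
      rcases le_or_gt t T with htT | htT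
      · have := hfnn t ht
        simp only [hgdef]
        linarith
      · have h1 : f T ≤ f t := hfmono T t hTnn htT.le
        rw [hfT] at h1
        simp only [hgdef]
        linarith
    have : M' ≤ η (T + M') := by
      simp only [hetadef]
      linarith
    have hMM' : M ≤ M' := le_max_left _ _
    linarith
  · intro s hs
    exact heta_le_f s hs
end

section
/- Consider the scalar ODE ẋ = f(x) with f(x) = -x·ln|x| for x ≠ 0 and f(0) = 0. For any x ∈ ℝ and t ≥ 0, the function φ(t) := sign(x)·|x|^{exp(-t)} (with φ(t) = 0 when x = 0) satisfies φ(0) = x and φ'(t) = f(φ(t)) for all t ≥ 0. -/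
theorem explicit_solution_xlnx (x : ℝ) :
    (Real.sign x * |x| ^ Real.exp (-(0:ℝ)) = x) ∧
    (∀ t : ℝ, 0 ≤ t →
      HasDerivAt (fun τ : ℝ => Real.sign x * |x| ^ Real.exp (-τ))
        (if Real.sign x * |x| ^ Real.exp (-t) = 0 then 0
          else -(Real.sign x * |x| ^ Real.exp (-t)) *
            Real.log |Real.sign x * |x| ^ Real.exp (-t)|) t) := by
  constructor
  · rw [neg_zero, Real.exp_zero, Real.rpow_one]
    rcases lt_trichotomy x 0 with h | rfl | h
    · rw [Real.sign_of_neg h, abs_of_neg h]; ring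
    · simp
    · rw [Real.sign_of_pos h, abs_of_pos h]; ring
  · intro t ht
    rcases eq_or_ne x 0 with rfl | hx
    · simp only [Real.sign_zero, zero_mul, if_pos rfl]
      exact hasDerivAt_const t 0
    · have ha : (0:ℝ) < |x| := abs_pos.mpr hx
      have habs : |Real.sign x| = 1 := by
        rcases lt_or_gt_of_ne hx with h | h
        · simp [Real.sign_of_neg h]
        · simp [Real.sign_of_pos h]
      have hs : Real.sign x ≠ 0 := by
        intro h; rw [h] at habs; simp at habs
      have hrw : ∀ τ : ℝ, |x| ^ Real.exp (-τ) =
          Real.exp (Real.exp (-τ) * Real.log |x|) := fun τ =>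
        (Real.rpow_def_of_pos ha _).trans (by rw [mul_comm])
      have hφpos : ∀ τ : ℝ, (0:ℝ) < |x| ^ Real.exp (-τ) := fun τ =>
        Real.rpow_pos_of_pos ha _
      have hne : Real.sign x * |x| ^ Real.exp (-t) ≠ 0 :=
        mul_ne_zero hs (hφpos t).ne'
      rw [if_neg hne]
      have h1 : HasDerivAt (fun τ : ℝ => Real.exp (-τ)) (-Real.exp (-t)) t := by
        convert (hasDerivAt_neg t).exp using 1; ring
      have h2 : HasDerivAt (fun τ : ℝ => Real.exp (-τ) * Real.log |x|)
          (-Real.exp (-t) * Real.log |x|) t := h1.mul_const _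
      have h3 : HasDerivAt (fun τ : ℝ => Real.exp (Real.exp (-τ) * Real.log |x|))
          (Real.exp (Real.exp (-t) * Real.log |x|) * (-Real.exp (-t) * Real.log |x|)) t :=
        (Real.hasDerivAt_exp _).comp t h2
      have h4 := h3.const_mul (Real.sign x)
      have heq : (fun τ : ℝ => Real.sign x * |x| ^ Real.exp (-τ)) =
          fun τ : ℝ => Real.sign x * Real.exp (Real.exp (-τ) * Real.log |x|) := by
        funext τ; rw [hrw]
      rw [heq]
      refine h4.congr_deriv ?_
      rw [hrw t]
      have hlog : Real.log |Real.sign x * Real.exp (Real.exp (-t) * Real.log |x|)| =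
          Real.exp (-t) * Real.log |x| := by
        rw [abs_mul, habs, one_mul, abs_of_pos (Real.exp_pos _), Real.log_exp]
      rw [hlog]
      ring
end

section
/- Let f(x,u) := -|u|·x·ln|x| for x ≠ 0 and f(0,u) := 0, and let η be the class K∞ Lip₁ function with η(s) = -s/(2 ln s) for s ∈ (0, e^{-1}], η(s) = s/2 for s > e^{-1}. Then for every d ∈ [-1,1], f(x, d·η(|x|)) = (1/2)|d|·x·|x| for |x| ≤ e^{-1}, and f(x, d·η(|x|)) = -(1/2)|d|·x·|x|·ln|x| for |x| > e^{-1}; moreover x ↦ f(x, d·η(|x|)) is Lipschitz continuous on every bounded ball of ℝ, uniformly in d ∈ [-1,1], with Lipschitz constant max(C, C²) on the ball of radius C ≥ 1. -/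
open Real Set

noncomputable def hfun : ℝ → ℝ := fun x =>
  if |x| ≤ Real.exp (-1) then (1/2)*x*(abs x) else -(1/2)*x*(abs x)*Real.log (abs x)

lemma hfun_odd (x : ℝ) : hfun (-x) = -hfun x := by
  unfold hfun
  rcases le_or_gt |x| (Real.exp (-1)) with h | h
  · rw [abs_neg, if_pos h, if_pos h]; ring
  · rw [abs_neg, if_neg (not_le.2 h), if_neg (not_le.2 h)]; ring

lemma abs_quad (x y : ℝ) : abs (x*(abs x) - y*(abs y)) ≤ ((abs x)+(abs y)) * (abs (x-y)) := by
  rcases abs_cases x with ⟨hx1, hx2⟩ | ⟨hx1, hx2⟩ <;>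
    rcases abs_cases y with ⟨hy1, hy2⟩ | ⟨hy1, hy2⟩ <;>
    rcases abs_cases (x - y) with ⟨hz1, hz2⟩ | ⟨hz1, hz2⟩ <;>
    rw [hx1, hy1, hz1, abs_le] <;> constructor <;> nlinarith

lemma hfun_lip {C : ℝ} (hC : 1 ≤ C) :
    ∀ x ∈ Icc (-C) C, ∀ y ∈ Icc (-C) C, abs (hfun x - hfun y) ≤ max C (C^2) * (abs (x - y)) := by
  set a : ℝ := Real.exp (-1) with ha
  set K : ℝ := max C (C^2) with hK
  have ha0 : 0 < a := Real.exp_pos _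
  have ha1 : a < 1 := by
    rw [ha, ← Real.exp_zero]
    exact Real.exp_lt_exp.2 (by norm_num)
  have haC : a ≤ C := le_trans ha1.le hC
  have hCK : C ≤ K := le_max_left _ _
  have hC2K : C^2 ≤ K := le_max_right _ _
  have hK0 : 0 ≤ K := le_trans (by linarith) hCK
  -- middle piece
  have mid : ∀ x ∈ Icc (-a) a, ∀ y ∈ Icc (-a) a, abs (hfun x - hfun y) ≤ K * abs (x - y) := by
    intro x hx y hy
    have hxa : |x| ≤ a := abs_le.2 hx
    have hya : |y| ≤ a := abs_le.2 hy
    have e1 : hfun x = (1/2)*x*(abs x) := by unfold hfun; rw [if_pos hxa]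
    have e2 : hfun y = (1/2)*y*(abs y) := by unfold hfun; rw [if_pos hya]
    rw [e1, e2]
    have h0 : ((1/2)*x*(abs x) - (1/2)*y*(abs y)) = (1/2) * (x*(abs x) - y*(abs y)) := by ring
    rw [h0, abs_mul, abs_of_nonneg (by norm_num : (0:ℝ) ≤ (1:ℝ)/2)]
    have hq := abs_quad x y
    have hsum : (abs x) + (abs y) ≤ 2 * a := by linarith
    calc (1/2) * abs (x*(abs x) - y*(abs y)) ≤ (1/2) * (((abs x)+(abs y)) * abs (x-y)) := by
          apply mul_le_mul_of_nonneg_left hq (by norm_num)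
      _ ≤ (1/2) * (2*a * abs (x-y)) := by
          apply mul_le_mul_of_nonneg_left (mul_le_mul_of_nonneg_right hsum (abs_nonneg _)) (by norm_num)
      _ = a * abs (x-y) := by ring
      _ ≤ K * abs (x-y) := mul_le_mul_of_nonneg_right (le_trans haC hCK) (abs_nonneg _)
  -- right piece: hfun = F on [a, C]
  have hFeq : ∀ x ∈ Icc a C, hfun x = -(1/2) * x^2 * Real.log x := by
    intro x hx
    have hx0 : 0 < x := lt_of_lt_of_le ha0 hx.1
    unfold hfun
    rw [abs_of_pos hx0]
    rcases le_or_gt x a with h | h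
    · have hxa : x = a := le_antisymm h hx.1
      rw [if_pos h, hxa, ha, Real.log_exp]; ring
    · rw [if_neg (not_le.2 h)]; ring
  have right : ∀ x ∈ Icc a C, ∀ y ∈ Icc a C, abs (hfun x - hfun y) ≤ K * abs (x - y) := by
    intro x hx y hy
    rw [hFeq x hx, hFeq y hy]
    have key : ‖(fun x : ℝ => -(1/2) * x^2 * Real.log x) x -
        (fun x : ℝ => -(1/2) * x^2 * Real.log x) y‖ ≤ K * ‖x - y‖ := by
      apply Convex.norm_image_sub_le_of_norm_hasDerivWithin_le
        (f' := fun x => -(x * Real.log x + x/2)) ?_ ?_ (convex_Icc a C) hy hx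
      · intro z hz
        have hz0 : 0 < z := lt_of_lt_of_le ha0 hz.1
        have h1 : HasDerivAt (fun x : ℝ => -(1/2) * x^2 * Real.log x)
            (-(1/2) * ((2 * z^1) * Real.log z + z^2 * z⁻¹)) z := by
          have := ((hasDerivAt_pow 2 z).mul (Real.hasDerivAt_log hz0.ne')).const_mul (-(1/2) : ℝ)
          simpa [mul_assoc] using this
        have h2 : -(1/2) * ((2 * z^1) * Real.log z + z^2 * z⁻¹) = -(z * Real.log z + z/2) := by
          field_simp
        rw [h2] at h1
        exact h1.hasDerivWithinAt
      · intro z hz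
        have hz0 : 0 < z := lt_of_lt_of_le ha0 hz.1
        have hlogz : -1 ≤ Real.log z := by
          calc (-1 : ℝ) = Real.log a := by rw [ha, Real.log_exp]
          _ ≤ Real.log z := Real.log_le_log ha0 hz.1
        rw [Real.norm_eq_abs, abs_neg]
        rcases le_or_gt z 1 with h1 | h1
        · have hlz : Real.log z ≤ 0 := Real.log_nonpos hz0.le h1
          have hb : abs (z * Real.log z + z/2) ≤ z/2 := by
            rw [abs_le]; constructor <;> nlinarith
          calc abs (z * Real.log z + z/2) ≤ z/2 := hb
            _ ≤ 1 := by linarith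
            _ ≤ C := hC
            _ ≤ K := hCK
        · have hlz : 0 ≤ Real.log z := Real.log_nonneg h1.le
          have hls : Real.log z ≤ z - 1 := Real.log_le_sub_one_of_pos hz0
          have hb : abs (z * Real.log z + z/2) ≤ z^2 := by
            rw [abs_le]; constructor <;> nlinarith [hz.2]
          calc abs (z * Real.log z + z/2) ≤ z^2 := hb
            _ ≤ C^2 := by nlinarith [hz.2, hz0.le]
            _ ≤ K := hC2K
    simpa [Real.norm_eq_abs, abs_sub_comm] using key
  -- left piece via oddness
  have left : ∀ x ∈ Icc (-C) (-a), ∀ y ∈ Icc (-C) (-a), abs (hfun x - hfun y) ≤ K * abs (x - y) := by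
    intro x hx y hy
    have hx' : -x ∈ Icc a C := ⟨by linarith [hx.2], by linarith [hx.1]⟩
    have hy' : -y ∈ Icc a C := ⟨by linarith [hy.2], by linarith [hy.1]⟩
    have hr := right (-x) hx' (-y) hy'
    rw [hfun_odd, hfun_odd] at hr
    have e1 : abs (-hfun x - -hfun y) = abs (hfun x - hfun y) := by rw [← abs_neg]; ring_nf
    have e2 : abs ((-x) - (-y)) = abs (x - y) := by rw [← abs_neg]; ring_nf
    rw [e1, e2] at hr
    exact hr
  -- glue
  have glue : ∀ b c e : ℝ, b ≤ c → c ≤ e →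
      (∀ x ∈ Icc b c, ∀ y ∈ Icc b c, abs (hfun x - hfun y) ≤ K * abs (x - y)) →
      (∀ x ∈ Icc c e, ∀ y ∈ Icc c e, abs (hfun x - hfun y) ≤ K * abs (x - y)) →
      ∀ x ∈ Icc b e, ∀ y ∈ Icc b e, abs (hfun x - hfun y) ≤ K * abs (x - y) := by
    intro b c e hbc hce h1 h2
    have main : ∀ x ∈ Icc b e, ∀ y ∈ Icc b e, x ≤ y → abs (hfun x - hfun y) ≤ K * abs (x - y) := by
      intro x hx y hy hxy
      rcases le_or_gt y c with h | h
      · exact h1 x ⟨hx.1, le_trans hxy h⟩ y ⟨hy.1, h⟩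
      rcases le_or_gt c x with h' | h'
      · exact h2 x ⟨h', hx.2⟩ y ⟨le_trans h' hxy, hy.2⟩
      · have e1 := h1 x ⟨hx.1, h'.le⟩ c ⟨hbc, le_refl c⟩
        have e2 := h2 c ⟨le_refl c, hce⟩ y ⟨h.le, hy.2⟩
        calc abs (hfun x - hfun y) ≤ abs (hfun x - hfun c) + abs (hfun c - hfun y) :=
              abs_sub_le _ _ _
          _ ≤ K * abs (x - c) + K * abs (c - y) := add_le_add e1 e2
          _ = K * (c - x) + K * (y - c) := by
              rw [abs_of_nonpos (by linarith), abs_of_nonpos (by linarith)]; ring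
          _ = K * (y - x) := by ring
          _ = K * abs (x - y) := by rw [abs_of_nonpos (by linarith)]; ring
    intro x hx y hy
    rcases le_total x y with h | h
    · exact main x hx y hy h
    · rw [abs_sub_comm, abs_sub_comm x y]; exact main y hy x hx h
  have step1 := glue (-C) (-a) a (by linarith) (by linarith) left mid
  exact glue (-C) a C (by linarith) haC step1 right

lemma eta_eq_small {s : ℝ} (hs0 : s ≠ 0) (hs : s ≤ Real.exp (-1)) :
    (if s = 0 then 0 else if s ≤ Real.exp (-1) then -s / (2 * Real.log s) else s / 2)
      = -s / (2 * Real.log s) := by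
  rw [if_neg hs0, if_pos hs]

theorem closed_loop_lipschitz :
    let η : ℝ → ℝ := fun s =>
      if s = 0 then 0
      else if s ≤ Real.exp (-1) then -s / (2 * Real.log s) else s / 2
    let f : ℝ → ℝ → ℝ := fun x u => if x = 0 then 0 else -|u| * x * Real.log |x|
    (∀ d : ℝ, d ∈ Set.Icc (-1 : ℝ) 1 → ∀ x : ℝ,
        (|x| ≤ Real.exp (-1) → f x (d * η |x|) = (1 / 2) * |d| * x * |x|) ∧
        (Real.exp (-1) < |x| →
          f x (d * η |x|) = -(1 / 2) * |d| * x * |x| * Real.log |x|)) ∧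
    (∀ C : ℝ, 1 ≤ C → ∀ d : ℝ, d ∈ Set.Icc (-1 : ℝ) 1 → ∀ x₁ x₂ : ℝ,
        |x₁| ≤ C → |x₂| ≤ C →
        |f x₁ (d * η |x₁|) - f x₂ (d * η |x₂|)| ≤ max C (C ^ 2) * |x₁ - x₂|) := by
  intro η f
  have part1 : ∀ d : ℝ, d ∈ Set.Icc (-1 : ℝ) 1 → ∀ x : ℝ,
      (|x| ≤ Real.exp (-1) → f x (d * η |x|) = (1 / 2) * |d| * x * |x|) ∧
      (Real.exp (-1) < |x| →
        f x (d * η |x|) = -(1 / 2) * |d| * x * |x| * Real.log |x|) := by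
    intro d _ x
    constructor
    · intro hx
      by_cases hx0 : x = 0
      · subst hx0; simp [f]
      · have hax : (0:ℝ) < |x| := abs_pos.2 hx0
        have hL : Real.log |x| ≤ -1 := by
          calc Real.log |x| ≤ Real.log (Real.exp (-1)) := Real.log_le_log hax hx
            _ = -1 := Real.log_exp _
        have hLneg : Real.log |x| < 0 := lt_of_le_of_lt hL (by norm_num)
        have hLne : Real.log |x| ≠ 0 := ne_of_lt hLneg
        have heta : η |x| = -|x| / (2 * Real.log |x|) := eta_eq_small (ne_of_gt hax) hx
        simp only [f]
        rw [if_neg hx0, heta]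
        have habs : abs (d * (-(abs x) / (2 * Real.log (abs x))))
            = (abs d) * ((abs x) / (-(2 * Real.log (abs x)))) := by
          rw [abs_mul, abs_div, abs_neg, abs_abs, abs_of_neg (by linarith : 2 * Real.log |x| < 0)]
        rw [habs]
        have hLne' : Real.log x ≠ 0 := by rwa [Real.log_abs] at hLne
        field_simp [hLne']
    · intro hx
      have hax : (0:ℝ) < |x| := lt_trans (Real.exp_pos _) hx
      have hx0 : x ≠ 0 := by simpa [abs_pos] using hax
      have heta : η |x| = |x| / 2 := by
        simp only [η]
        rw [if_neg (ne_of_gt hax), if_neg (not_le.2 hx)]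
      simp only [f]
      rw [if_neg hx0, heta]
      have habs : abs (d * ((abs x) / 2)) = (abs d) * ((abs x) / 2) := by
        rw [abs_mul, abs_div, abs_abs, abs_of_pos (by norm_num : (0:ℝ) < 2)]
      rw [habs]
      ring
  refine ⟨part1, ?_⟩
  intro C hC d hd x₁ x₂ hx₁ hx₂
  have hd1 : |d| ≤ 1 := abs_le.2 hd
  have geq : ∀ x : ℝ, f x (d * η |x|) = |d| * hfun x := by
    intro x
    rcases le_or_gt |x| (Real.exp (-1)) with h | h
    · rw [(part1 d hd x).1 h]
      unfold hfun
      rw [if_pos h]; ring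
    · rw [(part1 d hd x).2 h]
      unfold hfun
      rw [if_neg (not_le.2 h)]; ring
  rw [geq x₁, geq x₂]
  have hlip := hfun_lip hC x₁ (abs_le.1 hx₁) x₂ (abs_le.1 hx₂)
  have hfact : (|d| * hfun x₁) - (|d| * hfun x₂) = |d| * (hfun x₁ - hfun x₂) := by ring
  calc |(|d| * hfun x₁) - (|d| * hfun x₂)| = |d| * |hfun x₁ - hfun x₂| := by
        rw [hfact, abs_mul, abs_abs]
    _ ≤ 1 * |hfun x₁ - hfun x₂| := mul_le_mul_of_nonneg_right hd1 (abs_nonneg _)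
    _ = |hfun x₁ - hfun x₂| := one_mul _
    _ ≤ max C (C ^ 2) * |x₁ - x₂| := hlip
end
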